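/- arXiv:math/0611666 — 2 statements merged into one kernel-verified Lean document; each statement's English description precedes it below -/
import Mathlib

section
/- For a reversible Markov chain with transition matrix P on a countable state space V with reversible measure π, the sequence n ↦ P^{2n}(x,x) is non-increasing in n, for every state x. -/
open scoped BigOperators NNReal ENNReal

attribute [local instance] Classical.propDecidable

/-- `n`-step transition kernel (matrix power) of a kernel `P` on a countable state space. -/
noncomputable def kpow {V : Type*} (P : V → V → ℝ) : ℕ → V → V → ℝ
  | 0 => fun x y => if x = y then (1 : ℝ) else 0
  | n + 1 => fun x y => ∑' z, kpow P n x z * P z y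

namespace RevAux

open ENNReal

variable {V : Type*}

/-- ENNReal version of the kernel power. -/
noncomputable def kpE (p : V → V → ℝ≥0∞) : ℕ → V → V → ℝ≥0∞
  | 0 => fun x y => if x = y then 1 else 0
  | n + 1 => fun x y => ∑' z, kpE p n x z * p z y

lemma kpE_row (p : V → V → ℝ≥0∞) (hrow : ∀ a, ∑' b, p a b = 1) :
    ∀ n x, ∑' y, kpE p n x y = 1 := by
  intro n
  induction n with
  | zero =>
    intro x
    show ∑' y, (if x = y then (1:ℝ≥0∞) else 0) = 1
    rw [tsum_eq_single x (fun y hy => by simp [Ne.symm hy])]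
    simp
  | succ n ih =>
    intro x
    calc ∑' y, kpE p (n+1) x y = ∑' y, ∑' z, kpE p n x z * p z y := rfl
      _ = ∑' z, ∑' y, kpE p n x z * p z y := ENNReal.tsum_comm
      _ = ∑' z, kpE p n x z * ∑' y, p z y := by
          exact tsum_congr fun z => ENNReal.tsum_mul_left
      _ = 1 := by simp only [hrow, mul_one]; exact ih x

lemma kpE_le_one (p : V → V → ℝ≥0∞) (hrow : ∀ a, ∑' b, p a b = 1)
    (n : ℕ) (x y : V) : kpE p n x y ≤ 1 :=
  (ENNReal.le_tsum y).trans_eq (kpE_row p hrow n x)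

lemma kpE_ne_top (p : V → V → ℝ≥0∞) (hrow : ∀ a, ∑' b, p a b = 1)
    (n : ℕ) (x y : V) : kpE p n x y ≠ ⊤ :=
  ne_top_of_le_ne_top ENNReal.one_ne_top (kpE_le_one p hrow n x y)

lemma kpE_one (p : V → V → ℝ≥0∞) (x y : V) : kpE p 1 x y = p x y := by
  show ∑' z, (if x = z then (1:ℝ≥0∞) else 0) * p z y = p x y
  rw [tsum_eq_single x (fun z hz => by simp [Ne.symm hz])]
  simp

lemma kpE_add (p : V → V → ℝ≥0∞) (m n : ℕ) (x y : V) :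
    kpE p (m + n) x y = ∑' z, kpE p m x z * kpE p n z y := by
  induction n generalizing y with
  | zero =>
    rw [tsum_eq_single y (fun z hz => by
      show kpE p m x z * (if z = y then 1 else 0) = 0
      simp [hz])]
    show kpE p m x y = kpE p m x y * (if y = y then 1 else 0)
    simp
  | succ n ih =>
    show (∑' z, kpE p (m + n) x z * p z y) = _
    calc (∑' z, kpE p (m + n) x z * p z y)
        = ∑' z, (∑' w, kpE p m x w * kpE p n w z) * p z y := by
          exact tsum_congr fun z => by rw [ih]
      _ = ∑' z, ∑' w, kpE p m x w * kpE p n w z * p z y := by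
          exact tsum_congr fun z => ENNReal.tsum_mul_right.symm
      _ = ∑' w, ∑' z, kpE p m x w * kpE p n w z * p z y := ENNReal.tsum_comm
      _ = ∑' w, kpE p m x w * ∑' z, kpE p n w z * p z y := by
          refine tsum_congr fun w => ?_
          rw [← ENNReal.tsum_mul_left]
          exact tsum_congr fun z => by ring
      _ = ∑' w, kpE p m x w * kpE p (n+1) w y := rfl

lemma kpE_succ_left (p : V → V → ℝ≥0∞) (n : ℕ) (x y : V) :
    kpE p (n + 1) x y = ∑' z, p x z * kpE p n z y := by
  have : kpE p (n + 1) x y = kpE p (1 + n) x y := by rw [Nat.add_comm]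
  rw [this, kpE_add]
  exact tsum_congr fun z => by rw [kpE_one]

lemma kpE_rev (p : V → V → ℝ≥0∞) (ν : V → ℝ≥0∞)
    (hrev : ∀ a b, ν a * p a b = ν b * p b a) :
    ∀ n a b, ν a * kpE p n a b = ν b * kpE p n b a := by
  intro n
  induction n with
  | zero =>
    intro a b
    by_cases h : a = b
    · subst h; rfl
    · show ν a * (if a = b then 1 else 0) = ν b * (if b = a then 1 else 0)
      simp [h, Ne.symm h]
  | succ n ih =>
    intro a b
    calc ν a * kpE p (n+1) a b = ν a * ∑' z, kpE p n a z * p z b := rfl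
      _ = ∑' z, ν a * (kpE p n a z * p z b) := ENNReal.tsum_mul_left.symm
      _ = ∑' z, (ν a * kpE p n a z) * p z b := tsum_congr fun z => by ring
      _ = ∑' z, (ν z * kpE p n z a) * p z b := tsum_congr fun z => by rw [ih]
      _ = ∑' z, kpE p n z a * (ν z * p z b) := tsum_congr fun z => by ring
      _ = ∑' z, kpE p n z a * (ν b * p b z) := tsum_congr fun z => by rw [hrev]
      _ = ∑' z, ν b * (p b z * kpE p n z a) := tsum_congr fun z => by ring
      _ = ν b * ∑' z, p b z * kpE p n z a := ENNReal.tsum_mul_left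
      _ = ν b * kpE p (n+1) b a := by rw [kpE_succ_left]

lemma finset_cs (s : Finset V) (p h : V → ℝ≥0∞) (hp : ∀ z, p z ≠ ⊤) (hh : ∀ z, h z ≠ ⊤) :
    (∑ z ∈ s, p z * h z) ^ 2 ≤ (∑ z ∈ s, p z) * ∑ z ∈ s, p z * h z ^ 2 := by
  set f : V → ℝ≥0 := fun z => (p z).toNNReal with hf
  set g : V → ℝ≥0 := fun z => (h z).toNNReal with hg
  have hpz : ∀ z, p z = (f z : ℝ≥0∞) := fun z => (ENNReal.coe_toNNReal (hp z)).symm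
  have hhz : ∀ z, h z = (g z : ℝ≥0∞) := fun z => (ENNReal.coe_toNNReal (hh z)).symm
  have key : (∑ z ∈ s, f z * g z) ^ 2 ≤ (∑ z ∈ s, f z) * ∑ z ∈ s, f z * g z ^ 2 := by
    have h2 := Finset.sum_mul_sq_le_sq_mul_sq s (fun z => NNReal.sqrt (f z))
      (fun z => NNReal.sqrt (f z) * g z)
    calc (∑ z ∈ s, f z * g z) ^ 2
        = (∑ z ∈ s, NNReal.sqrt (f z) * (NNReal.sqrt (f z) * g z)) ^ 2 := by
          congr 1
          exact Finset.sum_congr rfl fun z _ => by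
            rw [← mul_assoc, NNReal.mul_self_sqrt]
      _ ≤ (∑ z ∈ s, NNReal.sqrt (f z) ^ 2) * ∑ z ∈ s, (NNReal.sqrt (f z) * g z) ^ 2 := h2
      _ = (∑ z ∈ s, f z) * ∑ z ∈ s, f z * g z ^ 2 := by
          congr 1
          · exact Finset.sum_congr rfl fun z _ => NNReal.sq_sqrt _
          · exact Finset.sum_congr rfl fun z _ => by rw [mul_pow, NNReal.sq_sqrt]
  simp only [hpz, hhz]
  exact_mod_cast key

lemma tsum_cs (p h : V → ℝ≥0∞) (hp : ∀ z, p z ≠ ⊤) (hh : ∀ z, h z ≠ ⊤) :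
    (∑' z, p z * h z) ^ 2 ≤ (∑' z, p z) * ∑' z, p z * h z ^ 2 := by
  rw [pow_two, ENNReal.tsum_eq_iSup_sum (f := fun z => p z * h z), ENNReal.iSup_mul]
  refine iSup_le fun s => ?_
  rw [ENNReal.mul_iSup]
  refine iSup_le fun t => ?_
  calc (∑ z ∈ s, p z * h z) * (∑ z ∈ t, p z * h z)
      ≤ (∑ z ∈ s ∪ t, p z * h z) * (∑ z ∈ s ∪ t, p z * h z) :=
        mul_le_mul' (Finset.sum_le_sum_of_subset Finset.subset_union_left)
          (Finset.sum_le_sum_of_subset Finset.subset_union_right)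
    _ = (∑ z ∈ s ∪ t, p z * h z) ^ 2 := (pow_two _).symm
    _ ≤ (∑ z ∈ s ∪ t, p z) * ∑ z ∈ s ∪ t, p z * h z ^ 2 := finset_cs _ p h hp hh
    _ ≤ (∑' z, p z) * ∑' z, p z * h z ^ 2 :=
        mul_le_mul' (ENNReal.sum_le_tsum _) (ENNReal.sum_le_tsum _)

end RevAux

section KpowAux

variable {V : Type*}

lemma kpow_nonneg (P : V → V → ℝ) (hPnn : ∀ x y, 0 ≤ P x y) :
    ∀ n x y, 0 ≤ kpow P n x y := by
  intro n
  induction n with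
  | zero => intro x y; show (0:ℝ) ≤ if x = y then 1 else 0; split <;> norm_num
  | succ n ih =>
    intro x y
    exact tsum_nonneg fun z => mul_nonneg (ih x z) (hPnn z y)

end KpowAux

/-- For a reversible Markov chain `P` on a countable state space `V` with positive
reversible measure `π`, the sequence `n ↦ P^{2n}(x,x)` is non-increasing. -/
theorem stmt0 {V : Type*} [Countable V] (P : V → V → ℝ) (π : V → ℝ)
    (hπ : ∀ x, 0 < π x)
    (hPnn : ∀ x y, 0 ≤ P x y)
    (hstoch : ∀ x, ∑' y, P x y = 1)
    (hrev : ∀ x y, π x * P x y = π y * P y x)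
    (x : V) (n : ℕ) :
    kpow P (2 * (n + 1)) x x ≤ kpow P (2 * n) x x := by
  classical
  -- summability of rows of P
  have hsumP : ∀ a, Summable (fun b => P a b) := by
    intro a
    by_contra h
    have h1 := hstoch a
    rw [tsum_eq_zero_of_not_summable h] at h1
    norm_num at h1
  set p : V → V → ℝ≥0∞ := fun a b => ENNReal.ofReal (P a b) with hp
  set ν : V → ℝ≥0∞ := fun a => ENNReal.ofReal (π a) with hν
  have hν0 : ∀ z, ν z ≠ 0 := fun z => (ENNReal.ofReal_pos.mpr (hπ z)).ne'
  have hνt : ∀ z, ν z ≠ ⊤ := fun z => ENNReal.ofReal_ne_top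
  have hpt : ∀ a b, p a b ≠ ⊤ := fun a b => ENNReal.ofReal_ne_top
  have hrowE : ∀ a, ∑' b, p a b = 1 := by
    intro a
    rw [show (fun b => p a b) = fun b => ENNReal.ofReal (P a b) from rfl,
      ← ENNReal.ofReal_tsum_of_nonneg (hPnn a) (hsumP a), hstoch, ENNReal.ofReal_one]
  have hrevE : ∀ a b, ν a * p a b = ν b * p b a := by
    intro a b
    rw [hp, hν]
    simp only
    rw [← ENNReal.ofReal_mul (hπ a).le, ← ENNReal.ofReal_mul (hπ b).le, hrev]
  -- bridge: kpow and kpE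
  have hbridge : ∀ m (a b : V), ENNReal.ofReal (kpow P m a b) = RevAux.kpE p m a b := by
    intro m
    induction m with
    | zero =>
      intro a b
      show ENNReal.ofReal (if a = b then 1 else 0) = if a = b then 1 else 0
      split <;> simp
    | succ m ih =>
      intro a b
      have hsumm : Summable (fun z => kpow P m a z) := by
        have hne : ∑' z, RevAux.kpE p m a z ≠ ⊤ := by
          rw [RevAux.kpE_row p hrowE m a]; exact ENNReal.one_ne_top
        have := ENNReal.summable_toReal hne
        refine this.congr fun z => ?_
        rw [← ih a z, ENNReal.toReal_ofReal (kpow_nonneg P hPnn m a z)]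
      have hPle1 : ∀ z y, P z y ≤ 1 := by
        intro z y
        have := Summable.le_tsum (hsumP z) y (fun b _ => hPnn z b)
        rwa [hstoch z] at this
      have hsmul : Summable (fun z => kpow P m a z * P z b) := by
        refine Summable.of_nonneg_of_le
          (fun z => mul_nonneg (kpow_nonneg P hPnn m a z) (hPnn z b))
          (fun z => ?_) hsumm
        exact mul_le_of_le_one_right (kpow_nonneg P hPnn m a z) (hPle1 z b)
      show ENNReal.ofReal (∑' z, kpow P m a z * P z b) = ∑' z, RevAux.kpE p m a z * p z b
      rw [ENNReal.ofReal_tsum_of_nonneg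
        (fun z => mul_nonneg (kpow_nonneg P hPnn m a z) (hPnn z b)) hsmul]
      exact tsum_congr fun z => by
        rw [ENNReal.ofReal_mul (kpow_nonneg P hPnn m a z), ih]
  -- reversibility for kpE
  have hkrev := RevAux.kpE_rev p ν hrevE
  -- A m = ν x * S m
  set S : ℕ → ℝ≥0∞ := fun m => ∑' z, (RevAux.kpE p m x z) ^ 2 * (ν z)⁻¹ with hS
  have hA : ∀ m, RevAux.kpE p (2 * m) x x = ν x * S m := by
    intro m
    have h2m : 2 * m = m + m := two_mul m
    rw [h2m, RevAux.kpE_add]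
    have hzx : ∀ z, RevAux.kpE p m z x = ν x * RevAux.kpE p m x z * (ν z)⁻¹ := by
      intro z
      have h1 := hkrev m z x
      calc RevAux.kpE p m z x = (ν z)⁻¹ * (ν z * RevAux.kpE p m z x) := by
            rw [← mul_assoc, ENNReal.inv_mul_cancel (hν0 z) (hνt z), one_mul]
        _ = (ν z)⁻¹ * (ν x * RevAux.kpE p m x z) := by rw [h1]
        _ = ν x * RevAux.kpE p m x z * (ν z)⁻¹ := by ring
    calc (∑' z, RevAux.kpE p m x z * RevAux.kpE p m z x)
        = ∑' z, ν x * ((RevAux.kpE p m x z) ^ 2 * (ν z)⁻¹) := by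
          refine tsum_congr fun z => ?_
          rw [hzx z]; ring
      _ = ν x * S m := ENNReal.tsum_mul_left
  -- key step : S (n+1) ≤ S n
  have hstep : S (n + 1) ≤ S n := by
    set h : V → ℝ≥0∞ := fun z => RevAux.kpE p n x z * (ν z)⁻¹ with hh
    have hht : ∀ z, h z ≠ ⊤ := by
      intro z
      exact ENNReal.mul_ne_top (RevAux.kpE_ne_top p hrowE n x z)
        (ENNReal.inv_ne_top.mpr (hν0 z))
    have hK1 : ∀ y, RevAux.kpE p (n + 1) x y = ν y * ∑' z, p y z * h z := by
      intro y
      show (∑' z, RevAux.kpE p n x z * p z y) = _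
      rw [← ENNReal.tsum_mul_left]
      refine tsum_congr fun z => ?_
      have hpzy : p z y = (ν z)⁻¹ * (ν y * p y z) := by
        rw [← hrevE z y, ← mul_assoc, ENNReal.inv_mul_cancel (hν0 z) (hνt z), one_mul]
      rw [hpzy, hh]; ring
    calc S (n + 1)
        = ∑' y, ν y * (∑' z, p y z * h z) ^ 2 := by
          refine tsum_congr fun y => ?_
          rw [hK1 y, mul_pow]
          rw [show (ν y) ^ 2 * (∑' z, p y z * h z) ^ 2 * (ν y)⁻¹
              = (ν y * (ν y * (ν y)⁻¹)) * (∑' z, p y z * h z) ^ 2 by ring,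
            ENNReal.mul_inv_cancel (hν0 y) (hνt y), mul_one]
      _ ≤ ∑' y, ν y * ∑' z, p y z * h z ^ 2 := by
          refine ENNReal.tsum_le_tsum fun y => ?_
          refine mul_le_mul_right ?_ (ν y)
          have := RevAux.tsum_cs (fun z => p y z) h (fun z => hpt y z) hht
          rwa [hrowE y, one_mul] at this
      _ = ∑' z, h z ^ 2 * ∑' y, ν y * p y z := by
          calc (∑' y, ν y * ∑' z, p y z * h z ^ 2)
              = ∑' y, ∑' z, h z ^ 2 * (ν y * p y z) := by
                refine tsum_congr fun y => ?_
                rw [← ENNReal.tsum_mul_left]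
                exact tsum_congr fun z => by ring
            _ = ∑' z, ∑' y, h z ^ 2 * (ν y * p y z) := ENNReal.tsum_comm
            _ = ∑' z, h z ^ 2 * ∑' y, ν y * p y z :=
                tsum_congr fun z => ENNReal.tsum_mul_left
      _ = S n := by
          refine tsum_congr fun z => ?_
          have hcol : ∑' y, ν y * p y z = ν z := by
            calc (∑' y, ν y * p y z) = ∑' y, ν z * p z y :=
                  tsum_congr fun y => by rw [hrevE]
              _ = ν z * ∑' y, p z y := ENNReal.tsum_mul_left
              _ = ν z := by rw [hrowE, mul_one]
          rw [hcol, hh, mul_pow]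
          rw [show (RevAux.kpE p n x z) ^ 2 * ((ν z)⁻¹) ^ 2 * ν z
              = (RevAux.kpE p n x z) ^ 2 * ((ν z)⁻¹ * ((ν z)⁻¹ * ν z)) by ring,
            ENNReal.inv_mul_cancel (hν0 z) (hνt z), mul_one]
  -- conclude
  have hmain : RevAux.kpE p (2 * (n + 1)) x x ≤ RevAux.kpE p (2 * n) x x := by
    rw [hA (n + 1), hA n]
    exact mul_le_mul_right hstep (ν x)
  have hkp : ∀ m, kpow P m x x = (RevAux.kpE p m x x).toReal := by
    intro m
    rw [← hbridge m x x, ENNReal.toReal_ofReal (kpow_nonneg P hPnn m x x)]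
  rw [hkp, hkp]
  exact ENNReal.toReal_mono (RevAux.kpE_ne_top p hrowE (2 * n) x x) hmain
end

section
/- Surface term lower bound: in the truncated chain setting, for any finite set Λ ⊂ C_{∞,α} with |Λ| ≥ 2, the two-step flow out of Λ satisfies Q̃_ω(Λ, C_{∞,α}\Λ) ≥ (α²/(2d))·|∂^{ω,α}Λ|, where ∂^{ω,α}Λ is the set of strong edges (conductance ≥ α) with one endpoint in Λ and the other in C_{∞,α}\Λ. -/
open scoped BigOperators

attribute [local instance] Classical.propDecidable

/-- Nearest-neighbor relation on `ℤ^d`. -/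
def isNbr {d : ℕ} (x y : Fin d → ℤ) : Prop := (∑ i, |x i - y i|) = 1

/-- Connectivity through edges of conductance at least `α`. -/
def strongConn {d : ℕ} (α : ℝ) (ω : (Fin d → ℤ) → (Fin d → ℤ) → ℝ) :
    (Fin d → ℤ) → (Fin d → ℤ) → Prop :=
  Relation.ReflTransGen (fun u v => isNbr u v ∧ α ≤ ω u v)

/-- The strong component `C_{∞,α}`. -/
def strongComp {d : ℕ} (α : ℝ) (ω : (Fin d → ℤ) → (Fin d → ℤ) → ℝ) :
    Set (Fin d → ℤ) :=
  {x | ∀ R : ℕ, ∃ y, strongConn α ω x y ∧ ∃ i, (R : ℤ) ≤ |y i|}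

/-- `π̃_ω(x) = ∑_{y∼x} ω_{xy} 1{ω_{xy} ≥ α}`. -/
noncomputable def piT {d : ℕ} (α : ℝ) (ω : (Fin d → ℤ) → (Fin d → ℤ) → ℝ)
    (x : Fin d → ℤ) : ℝ :=
  ∑ i, ((if α ≤ ω x (x + Pi.single i 1) then ω x (x + Pi.single i 1) else 0)
      + (if α ≤ ω x (x - Pi.single i 1) then ω x (x - Pi.single i 1) else 0))

/-- Truncated kernel `P̃_ω(x,y) = ω_{xy} 1{ω_{xy} ≥ α}/π̃_ω(x)` for neighbors. -/
noncomputable def PT {d : ℕ} (α : ℝ) (ω : (Fin d → ℤ) → (Fin d → ℤ) → ℝ)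
    (x y : Fin d → ℤ) : ℝ :=
  if isNbr x y ∧ α ≤ ω x y then ω x y / piT α ω x else 0

/-- Two-step kernel. -/
noncomputable def twoStep {V : Type*} (P : V → V → ℝ) (x y : V) : ℝ :=
  ∑' z, P x z * P z y

/-- `Q̃_ω(Λ, C_{∞,α}∖Λ)` for the two-step truncated kernel. -/
noncomputable def Qtil {d : ℕ} (α : ℝ) (ω : (Fin d → ℤ) → (Fin d → ℤ) → ℝ)
    (Λ : Finset (Fin d → ℤ)) : ℝ :=
  ∑ x ∈ Λ, ∑' y, if y ∈ strongComp α ω ∧ y ∉ Λ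
    then piT α ω x * twoStep (PT α ω) x y else 0

/-- Number of strong boundary edges `∂^{ω,α}Λ`: edges of conductance `≥ α` with one
endpoint in `Λ` and the other in `C_{∞,α}∖Λ`. -/
noncomputable def strongBdryCount {d : ℕ} (α : ℝ)
    (ω : (Fin d → ℤ) → (Fin d → ℤ) → ℝ) (Λ : Finset (Fin d → ℤ)) : ℝ :=
  ∑ x ∈ Λ, ∑ i : Fin d,
    ((if (x + Pi.single i 1) ∉ Λ ∧ (x + Pi.single i 1) ∈ strongComp α ω ∧
        α ≤ ω x (x + Pi.single i 1) then (1 : ℝ) else 0)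
   + (if (x - Pi.single i 1) ∉ Λ ∧ (x - Pi.single i 1) ∈ strongComp α ω ∧
        α ≤ ω x (x - Pi.single i 1) then (1 : ℝ) else 0))


section Aux
variable {d : ℕ}

def sig (p : Fin d × Bool) : Fin d → ℤ :=
  if p.2 then Pi.single p.1 1 else - Pi.single p.1 1

lemma abs_sig (p : Fin d × Bool) (j : Fin d) : |sig p j| = if j = p.1 then 1 else 0 := by
  rcases p with ⟨i, b⟩
  cases b <;> simp [sig, Pi.single_apply] <;> split <;> simp

lemma sig_apply_self (i : Fin d) (b : Bool) : sig (i, b) i = if b then 1 else -1 := by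
  cases b <;> simp [sig]

lemma sig_apply_ne {i j : Fin d} (hij : j ≠ i) (b : Bool) : sig (i, b) j = 0 := by
  cases b <;> simp [sig, Pi.single_eq_of_ne hij]

lemma isNbr_add_sig (x : Fin d → ℤ) (p : Fin d × Bool) : isNbr x (x + sig p) := by
  unfold isNbr
  calc ∑ j, |x j - (x + sig p) j|
      = ∑ j, if j = p.1 then 1 else 0 := by
        refine Finset.sum_congr rfl fun j _ => ?_
        have : x j - (x + sig p) j = -(sig p j) := by simp [Pi.add_apply]
        rw [this, abs_neg, abs_sig]
    _ = 1 := by simp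

lemma sig_injective : Function.Injective (sig (d := d)) := by
  rintro ⟨i, b⟩ ⟨j, c⟩ h
  have hij : i = j := by
    by_contra hne
    have h0 : sig (i, b) i = sig (j, c) i := congrFun h i
    rw [sig_apply_self, sig_apply_ne hne] at h0
    cases b <;> simp at h0
  subst hij
  have h0 : sig (i, b) i = sig (i, c) i := congrFun h i
  rw [sig_apply_self, sig_apply_self] at h0
  cases b <;> cases c <;> simp_all

lemma isNbr_exists {x y : Fin d → ℤ} (h : isNbr x y) : ∃ p : Fin d × Bool, y = x + sig p := by
  unfold isNbr at h
  have hnn : ∀ j ∈ Finset.univ, (0:ℤ) ≤ |x j - y j| := fun j _ => abs_nonneg _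
  obtain ⟨i, -, hi⟩ : ∃ i ∈ Finset.univ, |x i - y i| ≠ 0 := by
    by_contra hc
    push_neg at hc
    rw [Finset.sum_eq_zero (fun j hj => hc j hj)] at h
    omega
  have hle : |x i - y i| ≤ 1 := h ▸ Finset.single_le_sum hnn (Finset.mem_univ i)
  have habs : (0:ℤ) ≤ |x i - y i| := abs_nonneg _
  have hi1 : |x i - y i| = 1 := by omega
  have hsum : |x i - y i| + ∑ k ∈ Finset.univ.erase i, |x k - y k| = 1 := by
    simpa using Finset.add_sum_erase Finset.univ (fun j => |x j - y j|) (Finset.mem_univ i) |>.trans h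
  have hzero : ∑ k ∈ Finset.univ.erase i, |x k - y k| = 0 := by omega
  have hrest : ∀ j, j ≠ i → x j = y j := by
    intro j hj
    have := (Finset.sum_eq_zero_iff_of_nonneg (fun k _ => abs_nonneg _)).mp hzero j
      (Finset.mem_erase.mpr ⟨hj, Finset.mem_univ j⟩)
    have h2 := abs_eq_zero.mp this
    omega
  rcases (abs_eq (by norm_num : (0:ℤ) ≤ 1)).mp hi1 with hc | hc
  · refine ⟨(i, false), funext fun j => ?_⟩
    by_cases hj : j = i
    · subst hj; simp [sig, Pi.single_apply]; omega
    · simp [sig, Pi.single_apply, hj, hrest j hj]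
  · refine ⟨(i, true), funext fun j => ?_⟩
    by_cases hj : j = i
    · subst hj; simp [sig, Pi.single_apply]; omega
    · simp [sig, Pi.single_apply, hj, hrest j hj]

lemma isNbr_symm {x y : Fin d → ℤ} (h : isNbr x y) : isNbr y x := by
  unfold isNbr at h ⊢
  calc ∑ i, |y i - x i| = ∑ i, |x i - y i| :=
        Finset.sum_congr rfl fun i _ => abs_sub_comm _ _
    _ = 1 := h

/-- Neighbors of `x`. -/
def nbSet (x : Fin d → ℤ) : Finset (Fin d → ℤ) :=
  Finset.image (fun p => x + sig p) Finset.univ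

/-- Points within two steps of `x`. -/
def nb2Set (x : Fin d → ℤ) : Finset (Fin d → ℤ) :=
  Finset.image (fun q : (Fin d × Bool) × (Fin d × Bool) => x + sig q.1 + sig q.2) Finset.univ

end Aux

section Aux2
variable {d : ℕ} {α : ℝ} {ω : (Fin d → ℤ) → (Fin d → ℤ) → ℝ}

lemma piT_term_nonneg (hnn : ∀ x y, 0 ≤ ω x y) (x : Fin d → ℤ) (i : Fin d) :
    0 ≤ (if α ≤ ω x (x + Pi.single i 1) then ω x (x + Pi.single i 1) else 0)
      + (if α ≤ ω x (x - Pi.single i 1) then ω x (x - Pi.single i 1) else 0) := by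
  refine add_nonneg ?_ ?_ <;> split <;> first | exact hnn _ _ | exact le_rfl

lemma piT_nonneg (hnn : ∀ x y, 0 ≤ ω x y) (x : Fin d → ℤ) : 0 ≤ piT α ω x :=
  Finset.sum_nonneg fun i _ => piT_term_nonneg hnn x i

lemma piT_le (hub : ∀ x y, ω x y ≤ 1) (x : Fin d → ℤ) :
    piT α ω x ≤ 2 * d := by
  have h : ∀ i ∈ Finset.univ, (if α ≤ ω x (x + Pi.single i 1) then ω x (x + Pi.single i 1) else 0)
      + (if α ≤ ω x (x - Pi.single i 1) then ω x (x - Pi.single i 1) else 0) ≤ 2 := by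
    intro i _
    have h1 : (if α ≤ ω x (x + Pi.single i 1) then ω x (x + Pi.single i 1) else 0) ≤ 1 := by
      split; exact hub _ _; norm_num
    have h2 : (if α ≤ ω x (x - Pi.single i 1) then ω x (x - Pi.single i 1) else 0) ≤ 1 := by
      split; exact hub _ _; norm_num
    linarith
  calc piT α ω x ≤ ∑ _i : Fin d, (2:ℝ) := Finset.sum_le_sum h
    _ = 2 * d := by simp [mul_comm]

lemma piT_ge (hnn : ∀ x y, 0 ≤ ω x y) {x y : Fin d → ℤ} (h : isNbr x y) (hω : α ≤ ω x y) :
    α ≤ piT α ω x := by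
  obtain ⟨⟨i, b⟩, hy⟩ := isNbr_exists h
  have hle := Finset.single_le_sum (fun j _ => piT_term_nonneg (α := α) hnn x j)
    (Finset.mem_univ i)
  refine le_trans ?_ hle
  cases b
  · have hy' : y = x - Pi.single i 1 := by rw [hy]; simp [sig, sub_eq_add_neg]
    rw [hy'] at hω
    rw [if_pos hω]
    have : (0:ℝ) ≤ if α ≤ ω x (x + Pi.single i 1) then ω x (x + Pi.single i 1) else 0 := by
      split; exact hnn _ _; exact le_rfl
    linarith
  · have hy' : y = x + Pi.single i 1 := by rw [hy]; simp [sig]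
    rw [hy'] at hω
    rw [if_pos hω]
    have : (0:ℝ) ≤ if α ≤ ω x (x - Pi.single i 1) then ω x (x - Pi.single i 1) else 0 := by
      split; exact hnn _ _; exact le_rfl
    linarith

lemma PT_nonneg (hnn : ∀ x y, 0 ≤ ω x y) (x y : Fin d → ℤ) : 0 ≤ PT α ω x y := by
  unfold PT; split
  · exact div_nonneg (hnn _ _) (piT_nonneg hnn x)
  · exact le_rfl

lemma contrib (hd : 1 ≤ d) (hα : 0 < α) (hnn : ∀ x y, 0 ≤ ω x y) (hub : ∀ x y, ω x y ≤ 1)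
    {x w z : Fin d → ℤ} (hxw : isNbr x w) (hωxw : α ≤ ω x w)
    (hwz : isNbr w z) (hωwz : α ≤ ω w z) :
    α ^ 2 / (2 * d) ≤ piT α ω x * (PT α ω x w * PT α ω w z) := by
  have hπx : 0 < piT α ω x := lt_of_lt_of_le hα (piT_ge hnn hxw hωxw)
  have hπw : 0 < piT α ω w := lt_of_lt_of_le hα (piT_ge hnn hwz hωwz)
  have hπw2 : piT α ω w ≤ 2 * d := piT_le hub w
  have hd' : (1:ℝ) ≤ d := by exact_mod_cast hd
  have h2d : (0:ℝ) < 2 * d := by linarith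
  rw [PT, if_pos ⟨hxw, hωxw⟩, PT, if_pos ⟨hwz, hωwz⟩]
  have heq : piT α ω x * (ω x w / piT α ω x * (ω w z / piT α ω w))
      = ω x w * (ω w z / piT α ω w) := by
    field_simp
  rw [heq]
  have hA : α / (2 * d) ≤ ω w z / piT α ω w := div_le_div₀ (hnn w z) hωwz hπw hπw2
  calc α ^ 2 / (2 * d) = α * (α / (2 * d)) := by ring
    _ ≤ ω x w * (ω w z / piT α ω w) :=
      mul_le_mul hωxw hA (by positivity) (hnn _ _)

/-- The summand of the triple sum. -/
noncomputable def Tv (α : ℝ) (ω : (Fin d → ℤ) → (Fin d → ℤ) → ℝ)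
    (Λ : Finset (Fin d → ℤ)) (x w z : Fin d → ℤ) : ℝ :=
  if z ∈ strongComp α ω ∧ z ∉ Λ then piT α ω x * (PT α ω x w * PT α ω w z) else 0

lemma Tv_nonneg (hnn : ∀ x y, 0 ≤ ω x y) (Λ : Finset (Fin d → ℤ)) (x w z : Fin d → ℤ) :
    0 ≤ Tv α ω Λ x w z := by
  unfold Tv; split
  · exact mul_nonneg (piT_nonneg hnn x) (mul_nonneg (PT_nonneg hnn _ _) (PT_nonneg hnn _ _))
  · exact le_rfl

end Aux2

/-- Surface term lower bound: for any finite connected `Λ ⊆ C_{∞,α}` with `|Λ| ≥ 2`,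
`Q̃_ω(Λ, C_{∞,α}∖Λ) ≥ (α²/(2d)) |∂^{ω,α}Λ|`. -/
theorem stmt6 (d : ℕ) (hd : 1 ≤ d) (α : ℝ) (hα : 0 < α) (hα1 : α ≤ 1)
    (ω : (Fin d → ℤ) → (Fin d → ℤ) → ℝ)
    (hsym : ∀ x y, ω x y = ω y x)
    (hnn : ∀ x y, 0 ≤ ω x y) (hub : ∀ x y, ω x y ≤ 1)
    (Λ : Finset (Fin d → ℤ)) (hcard : 2 ≤ Λ.card)
    (hsub : (↑Λ : Set (Fin d → ℤ)) ⊆ strongComp α ω)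
    (hconn : ∀ x ∈ Λ, ∀ y ∈ Λ,
      Relation.ReflTransGen
        (fun u v => u ∈ Λ ∧ v ∈ Λ ∧ isNbr u v ∧ α ≤ ω u v) x y) :
    (α ^ 2 / (2 * d)) * strongBdryCount α ω Λ ≤ Qtil α ω Λ := by
  classical
  -- a choice of a strong neighbor inside Λ for each point of Λ
  have hφex : ∀ y, ∃ x, y ∈ Λ → x ∈ Λ ∧ isNbr x y ∧ α ≤ ω x y := by
    intro y
    by_cases hy : y ∈ Λ
    · obtain ⟨y', hy', hne⟩ := Finset.exists_mem_ne (s := Λ) (by omega) y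
      rcases (hconn y hy y' hy').cases_head with heq | ⟨c, hstep, -⟩
      · exact absurd heq.symm hne
      · obtain ⟨-, hcΛ, hnbr, hω⟩ := hstep
        exact ⟨c, fun _ => ⟨hcΛ, isNbr_symm hnbr, hsym y c ▸ hω⟩⟩
    · exact ⟨y, fun h => absurd h hy⟩
  choose φ hφ using hφex
  -- support lemmas
  have hPTsupp : ∀ x w : Fin d → ℤ, w ∉ nbSet x → PT α ω x w = 0 := by
    intro x w hw
    rw [PT, if_neg]
    rintro ⟨hnbr, -⟩
    obtain ⟨p, hp⟩ := isNbr_exists hnbr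
    exact hw (Finset.mem_image.mpr ⟨p, Finset.mem_univ p, hp.symm⟩)
  have htwo : ∀ x z : Fin d → ℤ, twoStep (PT α ω) x z = ∑ w ∈ nbSet x, PT α ω x w * PT α ω w z := by
    intro x z
    unfold twoStep
    exact tsum_eq_sum fun w hw => by rw [hPTsupp x w hw, zero_mul]
  have htwo0 : ∀ x z : Fin d → ℤ, z ∉ nb2Set x → twoStep (PT α ω) x z = 0 := by
    intro x z hz
    unfold twoStep
    have : ∀ w, PT α ω x w * PT α ω w z = 0 := by
      intro w
      by_cases hxw : PT α ω x w = 0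
      · rw [hxw, zero_mul]
      · have hw : w ∈ nbSet x := by by_contra hc; exact hxw (hPTsupp x w hc)
        obtain ⟨p, -, hp⟩ := Finset.mem_image.mp hw
        have hwz : PT α ω w z = 0 := by
          rw [PT, if_neg]
          rintro ⟨hnbr, -⟩
          obtain ⟨q, hq⟩ := isNbr_exists hnbr
          exact hz (Finset.mem_image.mpr ⟨(p, q), Finset.mem_univ _, by rw [hp]; exact hq.symm⟩)
        rw [hwz, mul_zero]
    simp [this]
  -- rewrite Qtil as a finite triple sum
  have hQ : Qtil α ω Λ = ∑ x ∈ Λ, ∑ w ∈ nbSet x, ∑ z ∈ nb2Set x, Tv α ω Λ x w z := by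
    unfold Qtil
    refine Finset.sum_congr rfl fun x hx => ?_
    have hside : ∀ z ∉ nb2Set x,
        (if z ∈ strongComp α ω ∧ z ∉ Λ then piT α ω x * twoStep (PT α ω) x z else 0) = 0 := by
      intro z hz
      rw [htwo0 x z hz, mul_zero]
      split <;> rfl
    rw [tsum_eq_sum hside]
    rw [← Finset.sum_comm]
    refine Finset.sum_congr rfl fun z _ => ?_
    rw [htwo x z]
    by_cases hc : z ∈ strongComp α ω ∧ z ∉ Λ
    · rw [if_pos hc, Finset.mul_sum]
      exact Finset.sum_congr rfl fun w _ => by rw [Tv, if_pos hc]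
    · rw [if_neg hc]
      exact (Finset.sum_eq_zero fun w _ => by rw [Tv, if_neg hc]).symm
  -- lower bound the per-vertex boundary sum
  have hkey : ∀ w ∈ Λ, (∑ p : Fin d × Bool,
        if (w + sig p) ∉ Λ ∧ (w + sig p) ∈ strongComp α ω ∧ α ≤ ω w (w + sig p)
          then α ^ 2 / (2 * d) else 0)
      ≤ ∑ z ∈ nb2Set (φ w), Tv α ω Λ (φ w) w z := by
    intro w hw
    obtain ⟨hφΛ, hφnbr, hφω⟩ := hφ w hw
    obtain ⟨q, hq⟩ := isNbr_exists hφnbr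
    calc (∑ p : Fin d × Bool,
          if (w + sig p) ∉ Λ ∧ (w + sig p) ∈ strongComp α ω ∧ α ≤ ω w (w + sig p)
            then α ^ 2 / (2 * d) else 0)
        ≤ ∑ p : Fin d × Bool, Tv α ω Λ (φ w) w (w + sig p) := by
          refine Finset.sum_le_sum fun p _ => ?_
          by_cases hbc : (w + sig p) ∉ Λ ∧ (w + sig p) ∈ strongComp α ω ∧ α ≤ ω w (w + sig p)
          · rw [if_pos hbc, Tv, if_pos ⟨hbc.2.1, hbc.1⟩]
            exact contrib hd hα hnn hub hφnbr hφω (isNbr_add_sig w p) hbc.2.2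
          · rw [if_neg hbc]
            exact Tv_nonneg hnn Λ _ _ _
      _ = ∑ z ∈ Finset.image (fun p => w + sig p) Finset.univ, Tv α ω Λ (φ w) w z := by
          refine (Finset.sum_image fun p _ p' _ h => sig_injective ?_).symm
          exact add_left_cancel h
      _ ≤ ∑ z ∈ nb2Set (φ w), Tv α ω Λ (φ w) w z := by
          refine Finset.sum_le_sum_of_subset_of_nonneg ?_ fun z _ _ => Tv_nonneg hnn Λ _ _ _
          intro z hz
          obtain ⟨p, -, hp⟩ := Finset.mem_image.mp hz
          refine Finset.mem_image.mpr ⟨(q, p), Finset.mem_univ _, ?_⟩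
          rw [← hq, hp]
  -- regrouping the restricted sum
  have hswap : ∀ x ∈ Λ, (∑ w ∈ nbSet x,
        if w ∈ Λ ∧ φ w = x then ∑ z ∈ nb2Set x, Tv α ω Λ x w z else 0)
      = ∑ w ∈ Λ, if w ∈ Λ ∧ φ w = x then ∑ z ∈ nb2Set x, Tv α ω Λ x w z else 0 := by
    intro x hx
    have hmem : ∀ w, w ∈ Λ → φ w = x → w ∈ nbSet x := by
      intro w hwΛ hwx
      obtain ⟨p, hp⟩ := isNbr_exists (hφ w hwΛ).2.1
      exact Finset.mem_image.mpr ⟨p, Finset.mem_univ p, by rw [← hwx]; exact hp.symm⟩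
    rw [Finset.sum_subset (Finset.subset_union_left : nbSet x ⊆ nbSet x ∪ Λ) ?_,
        Finset.sum_subset (Finset.subset_union_right : Λ ⊆ nbSet x ∪ Λ) ?_]
    · intro w _ hwn
      rw [if_neg]
      rintro ⟨hwΛ, -⟩
      exact hwn hwΛ
    · intro w _ hwn
      rw [if_neg]
      rintro ⟨hwΛ, hwx⟩
      exact hwn (hmem w hwΛ hwx)
  have hpick : ∀ w ∈ Λ, (∑ x ∈ Λ,
        if w ∈ Λ ∧ φ w = x then ∑ z ∈ nb2Set x, Tv α ω Λ x w z else 0)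
      = ∑ z ∈ nb2Set (φ w), Tv α ω Λ (φ w) w z := by
    intro w hw
    have hre : ∀ x, (if w ∈ Λ ∧ φ w = x then ∑ z ∈ nb2Set x, Tv α ω Λ x w z else 0)
        = (if φ w = x then ∑ z ∈ nb2Set x, Tv α ω Λ x w z else 0) := by
      intro x
      by_cases h : φ w = x <;> simp [h, hw]
    simp only [hre]
    rw [Finset.sum_ite_eq Λ (φ w) (fun x => ∑ z ∈ nb2Set x, Tv α ω Λ x w z),
        if_pos (hφ w hw).1]
  -- boundary count identity
  have hcount : (∑ w ∈ Λ, ∑ p : Fin d × Bool,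
        if (w + sig p) ∉ Λ ∧ (w + sig p) ∈ strongComp α ω ∧ α ≤ ω w (w + sig p)
          then α ^ 2 / (2 * d) else 0)
      = α ^ 2 / (2 * d) * strongBdryCount α ω Λ := by
    unfold strongBdryCount
    rw [Finset.mul_sum]
    refine Finset.sum_congr rfl fun w hw => ?_
    rw [Finset.mul_sum, Fintype.sum_prod_type]
    refine Finset.sum_congr rfl fun i _ => ?_
    rw [Fintype.sum_bool]
    have e1 : w + sig (i, true) = w + Pi.single i 1 := by simp [sig]
    have e2 : w + sig (i, false) = w - Pi.single i 1 := by simp [sig, sub_eq_add_neg]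
    rw [e1, e2, mul_add]
    congr 1 <;> simp [mul_ite]
  -- assemble
  rw [hQ, ← hcount]
  calc (∑ w ∈ Λ, ∑ p : Fin d × Bool,
        if (w + sig p) ∉ Λ ∧ (w + sig p) ∈ strongComp α ω ∧ α ≤ ω w (w + sig p)
          then α ^ 2 / (2 * d) else 0)
      ≤ ∑ w ∈ Λ, ∑ z ∈ nb2Set (φ w), Tv α ω Λ (φ w) w z :=
        Finset.sum_le_sum hkey
    _ = ∑ w ∈ Λ, ∑ x ∈ Λ,
          (if w ∈ Λ ∧ φ w = x then ∑ z ∈ nb2Set x, Tv α ω Λ x w z else 0) :=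
        Finset.sum_congr rfl fun w hw => (hpick w hw).symm
    _ = ∑ x ∈ Λ, ∑ w ∈ Λ,
          (if w ∈ Λ ∧ φ w = x then ∑ z ∈ nb2Set x, Tv α ω Λ x w z else 0) :=
        Finset.sum_comm
    _ = ∑ x ∈ Λ, ∑ w ∈ nbSet x,
          (if w ∈ Λ ∧ φ w = x then ∑ z ∈ nb2Set x, Tv α ω Λ x w z else 0) :=
        Finset.sum_congr rfl fun x hx => (hswap x hx).symm
    _ ≤ ∑ x ∈ Λ, ∑ w ∈ nbSet x, ∑ z ∈ nb2Set x, Tv α ω Λ x w z := by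
        refine Finset.sum_le_sum fun x _ => Finset.sum_le_sum fun w _ => ?_
        split
        · exact le_rfl
        · exact Finset.sum_nonneg fun z _ => Tv_nonneg hnn Λ _ _ _
end
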